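/- Let U be a weak (A,K)-module, and let U^k = {u ∈ U | ω(ξ)u = 0 for all ξ ∈ k} be the ω-invariants. Then U^k is stable under the actions of A and K, hence is an (A,K)-submodule of U, and it is the largest (A,K)-submodule of U: for any (A,K)-module V, Hom_{(A,K)}(V,U) = Hom_{(A,K)}(V,U^k). -/
import Mathlib


/-- A Harish-Chandra pair `(A, K)`: an associative unital ℂ-algebra `A` with an
action `phi` of the group `K` by algebra automorphisms, together with the adjoint
action `ad` of `K` on the Lie algebra `k` of `K` and a `K`-equivariant Lie algebra
homomorphism `psi : k → A`.  (The algebraicity of the `K`-actions and the fact that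
`ad` and the differentiated actions are the genuine differentials are encoded
through the compatibility axioms that are actually used.) -/
structure HCPair (A : Type) [Ring A] [Algebra ℂ A] (K : Type) [Group K]
    (k : Type) [LieRing k] [LieAlgebra ℂ k] where
  phi : K →* (A ≃ₐ[ℂ] A)
  psi : k →ₗ[ℂ] A
  psi_bracket : ∀ x y : k, psi ⁅x, y⁆ = psi x * psi y - psi y * psi x
  ad : K →* (k ≃ₗ[ℂ] k)
  ad_bracket : ∀ (g : K) (x y : k), ad g ⁅x, y⁆ = ⁅ad g x, ad g y⁆
  psi_equivariant : ∀ (g : K) (x : k), psi (ad g x) = phi g (psi x)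

/-- A weak `(A,K)`-module: a ℂ-vector space `V` with an `A`-action `piA` and a
`K`-action `nu`, such that the `A`-action map is `K`-equivariant (axiom (HC3)). -/
structure WeakHCModule {A K k : Type} [Ring A] [Algebra ℂ A] [Group K]
    [LieRing k] [LieAlgebra ℂ k] (P : HCPair A K k)
    (V : Type) [AddCommGroup V] [Module ℂ V] where
  piA : A →ₐ[ℂ] Module.End ℂ V
  nu : K →* (Module.End ℂ V)ˣ
  hc3 : ∀ (g : K) (a : A),
    piA (P.phi g a) = (nu g : Module.End ℂ V) * piA a * (((nu g)⁻¹ : (Module.End ℂ V)ˣ) : Module.End ℂ V)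

/-- The differentiated `k`-action `nuL` of the algebraic `K`-action `nu` on a weak
`(A,K)`-module, encoded via the properties obtained by differentiating: it is a Lie
algebra representation, it is `K`-equivariant, and differentiating (HC3) together
with axiom (A2) gives `[nuL ξ, π(a)] = π([ψ(ξ), a])`. -/
structure DiffAction {A K k : Type} [Ring A] [Algebra ℂ A] [Group K]
    [LieRing k] [LieAlgebra ℂ k] {P : HCPair A K k}
    {V : Type} [AddCommGroup V] [Module ℂ V] (M : WeakHCModule P V) where
  nuL : k →ₗ[ℂ] Module.End ℂ V
  nuL_bracket : ∀ x y : k, nuL ⁅x, y⁆ = nuL x * nuL y - nuL y * nuL x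
  nuL_equivariant : ∀ (g : K) (x : k),
    nuL (P.ad g x) =
      (M.nu g : Module.End ℂ V) * nuL x * (((M.nu g)⁻¹ : (Module.End ℂ V)ˣ) : Module.End ℂ V)
  diff_hc3 : ∀ (x : k) (a : A),
    nuL x * M.piA a - M.piA a * nuL x = M.piA (P.psi x * a - a * P.psi x)

/-- `ω(ξ) = ν(ξ) − π(ψ(ξ))`. -/
def omegaAct {A K k : Type} [Ring A] [Algebra ℂ A] [Group K]
    [LieRing k] [LieAlgebra ℂ k] {P : HCPair A K k}
    {V : Type} [AddCommGroup V] [Module ℂ V] {M : WeakHCModule P V}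
    (D : DiffAction M) (x : k) : Module.End ℂ V :=
  D.nuL x - M.piA (P.psi x)

/-- A morphism of weak `(A,K)`-modules (together with its differentiated actions):
a linear map commuting with the `A`-, `K`- and differentiated `k`-actions. -/
def IsWeakHom {A K k : Type} [Ring A] [Algebra ℂ A] [Group K]
    [LieRing k] [LieAlgebra ℂ k] {P : HCPair A K k}
    {W V : Type} [AddCommGroup W] [Module ℂ W] [AddCommGroup V] [Module ℂ V]
    (N : WeakHCModule P W) (DN : DiffAction N)
    (M : WeakHCModule P V) (DM : DiffAction M) (f : W →ₗ[ℂ] V) : Prop :=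
  (∀ (a : A) (w : W), f (N.piA a w) = M.piA a (f w)) ∧
  (∀ (g : K) (w : W), f ((N.nu g : Module.End ℂ W) w) = (M.nu g : Module.End ℂ V) (f w)) ∧
  (∀ (x : k) (w : W), f (DN.nuL x w) = DM.nuL x (f w))

/-- Proposition 1.1.2, invariants: the space
`U^k = {u | ω(ξ)u = 0 ∀ξ}` of `ω`-invariants of a weak `(A,K)`-module `U` is
stable under the `A`- and `K`-actions, hence an `(A,K)`-submodule, and it is the
largest `(A,K)`-submodule: every morphism from an `(A,K)`-module (a weak module on
which `ω = 0`) into `U` takes values in `U^k`; thus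
`Hom_{(A,K)}(V,U) = Hom_{(A,K)}(V,U^k)`. -/
theorem omega_invariants_largest_submodule {A K k : Type} [Ring A] [Algebra ℂ A]
    [Group K] [LieRing k] [LieAlgebra ℂ k] (P : HCPair A K k)
    (U : Type) [AddCommGroup U] [Module ℂ U] (M : WeakHCModule P U)
    (D : DiffAction M) :
    (∀ (a : A) (u : U), (∀ ξ : k, omegaAct D ξ u = 0) →
        ∀ ξ : k, omegaAct D ξ (M.piA a u) = 0) ∧
    (∀ (g : K) (u : U), (∀ ξ : k, omegaAct D ξ u = 0) →
        ∀ ξ : k, omegaAct D ξ ((M.nu g : Module.End ℂ U) u) = 0) ∧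
    (∀ (W : Type) (_ : AddCommGroup W), ∀ (_ : Module ℂ W),
      ∀ (N : WeakHCModule P W) (DN : DiffAction N),
        (∀ x : k, DN.nuL x = N.piA (P.psi x)) →
        ∀ f : W →ₗ[ℂ] U, IsWeakHom N DN M D f →
          ∀ (w : W) (ξ : k), omegaAct D ξ (f w) = 0) := by
  refine ⟨?_, ?_, ?_⟩
  · intro a u hu ξ
    have h := D.diff_hc3 ξ a
    rw [map_sub, map_mul, map_mul] at h
    have hcomm : omegaAct D ξ * M.piA a = M.piA a * omegaAct D ξ := by
      unfold omegaAct
      rw [sub_mul, mul_sub, sub_eq_sub_iff_sub_eq_sub]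
      exact h
    calc omegaAct D ξ (M.piA a u) = (omegaAct D ξ * M.piA a) u := rfl
      _ = (M.piA a * omegaAct D ξ) u := by rw [hcomm]
      _ = M.piA a (omegaAct D ξ u) := rfl
      _ = 0 := by rw [hu ξ, map_zero]
  · intro g u hu ξ
    set η := P.ad g⁻¹ ξ with hη
    have hξ : P.ad g η = ξ := by
      have h1 : P.ad g * P.ad g⁻¹ = 1 := by rw [← map_mul, mul_inv_cancel, map_one]
      calc P.ad g (P.ad g⁻¹ ξ) = (P.ad g * P.ad g⁻¹) ξ := rfl
        _ = ξ := by rw [h1]; rfl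
    have h1 := D.nuL_equivariant g η
    rw [hξ] at h1
    have h2 : M.piA (P.psi ξ) =
        (M.nu g : Module.End ℂ U) * M.piA (P.psi η) *
          (((M.nu g)⁻¹ : (Module.End ℂ U)ˣ) : Module.End ℂ U) := by
      rw [← hξ, P.psi_equivariant, M.hc3]
    have hinv : (((M.nu g)⁻¹ : (Module.End ℂ U)ˣ) : Module.End ℂ U)
        ((M.nu g : Module.End ℂ U) u) = u := by
      rw [← Module.End.mul_apply, ← Units.val_mul, inv_mul_cancel, Units.val_one,
        Module.End.one_apply]
    have hωη : D.nuL η u - M.piA (P.psi η) u = 0 := hu η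
    show (D.nuL ξ - M.piA (P.psi ξ)) ((M.nu g : Module.End ℂ U) u) = 0
    rw [LinearMap.sub_apply, h1, h2]
    simp only [Module.End.mul_apply, hinv]
    rw [← map_sub, hωη, map_zero]
  · intro W _ _ N DN hN f hf w ξ
    show (D.nuL ξ - M.piA (P.psi ξ)) (f w) = 0
    rw [LinearMap.sub_apply, ← hf.2.2, ← hf.1, ← hN, sub_self]
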